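/- arXiv:1406.4704 — 2 statements merged into one kernel-verified Lean document; each statement's English description precedes it below -/
import Mathlib

section
/- With h = T/m, the conditional variance error of the time-changed Euler scheme is d'(s) = (h²/T)(1 - h/(T-s))² a for s ∈ [0, T-h]; it satisfies d'(s) ≤ (h/m)·a, it vanishes at s = T - h, and d'((i-1)h)/d((i-1)h) = (m-i)²/(m(m-i+1)) for i = 1,...,m, where d(s) = h² a/(T-s). -/
/-! On the grid `T = m h` one has `h²/T = h/m`, and for `s ≤ T - h` the factor `1 - h/(T-s)` lies
in `[0, 1]`, which gives the bound. Dividing `d'` by `d` leaves `(T - s - h)² / (T (T - s))`, and at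
`s = (i-1)h` we have `T - s = (m-i+1)h`, so `h` cancels from the ratio. -/

lemma one_sub_div_sq_le_one {h x : ℝ} (hh : 0 ≤ h) (hhx : h ≤ x) : (1 - h / x) ^ 2 ≤ 1 :=
  pow_le_one₀ (sub_nonneg.mpr (div_le_one_of_le₀ hhx (hh.trans hhx)))
    (sub_le_self _ (div_nonneg hh (hh.trans hhx)))

lemma sq_div_eq_div_of_eq_div {T m h : ℝ} (hT : T ≠ 0) (hh : h = T / m) : h ^ 2 / T = h / m := by
  subst hh
  field_simp

lemma sq_div_mul_one_sub_div_sq_mul_div_eq {T a h x : ℝ} (hh : h ≠ 0) (ha : a ≠ 0) (hx : x ≠ 0) :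
    h ^ 2 / T * (1 - h / x) ^ 2 * a / (h ^ 2 * a / x) = (x - h) ^ 2 / (T * x) := by
  field_simp

/-- With `h = T/m`, the conditional variance error of the time-changed Euler scheme is
`d'(s) = (h²/T)(1 - h/(T-s))² a`; it satisfies `d'(s) ≤ (h/m)·a`, it vanishes at
`s = T-h`, and `d'((i-1)h)/d((i-1)h) = (m-i)²/(m(m-i+1))` for `i = 1,…,m`, where
`d(s) = h² a/(T-s)`. -/
theorem stmt_5 (T a : ℝ) (hT : 0 < T) (ha : 0 < a) (m : ℕ) (hm : 2 ≤ m)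
    (h : ℝ) (hh : h = T / m) :
    (∀ s ∈ Set.Icc (0:ℝ) (T - h),
      (h ^ 2 / T) * (1 - h / (T - s)) ^ 2 * a ≤ (h / m) * a) ∧
    (h ^ 2 / T) * (1 - h / (T - (T - h))) ^ 2 * a = 0 ∧
    (∀ i ∈ Finset.Icc 1 m,
      ((h ^ 2 / T) * (1 - h / (T - (i - 1) * h)) ^ 2 * a) /
          (h ^ 2 * a / (T - (i - 1) * h)) =
        ((m : ℝ) - i) ^ 2 / ((m : ℝ) * ((m : ℝ) - i + 1))) := by
  have hm0 : (0 : ℝ) < m := by exact_mod_cast (by omega : 0 < m)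
  have hh0 : 0 < h := hh ▸ div_pos hT hm0
  have hTm : T = m * h := by rw [hh]; field_simp
  refine ⟨fun s hs => ?_, ?_, fun i hi => ?_⟩
  · rw [← sq_div_eq_div_of_eq_div hT.ne' hh]
    have hsq := one_sub_div_sq_le_one hh0.le (by linarith [hs.2] : h ≤ T - s)
    exact mul_le_mul_of_nonneg_right (mul_le_of_le_one_right (by positivity) hsq) ha.le
  · rw [sub_sub_cancel, div_self hh0.ne', sub_self]
    ring
  · obtain ⟨hi1, him⟩ := Finset.mem_Icc.mp hi
    have him' : (i : ℝ) ≤ m := by exact_mod_cast him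
    have hx : T - (i - 1) * h = (m - i + 1) * h := by rw [hTm]; ring
    have hx0 : T - (i - 1) * h ≠ 0 := by rw [hx]; exact mul_ne_zero (by linarith) hh0.ne'
    rw [sq_div_mul_one_sub_div_sq_mul_div_eq hh0.ne' ha.ne' hx0, hx, hTm]
    field_simp
    ring
end

section
/- Define J(s) = (T−s)²/T · H̃(τ(s)) with τ(s) = s(2−s/T) and H̃(t) = K(t)^{−1}, K(t)=∫_t^T e^{B̃(T−u)} ã e^{B̃'(T−u)} du, ã symmetric positive definite. Then lim_{s↑T} ã J(s) = I. -/
/-!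
Near `t = T` the integrand of `K(t)` is close to its value `ã` at `u = T`, so
`(T - t)⁻¹ K(t) → ã` as `t ↑ T`; since `ã` is invertible, `(T - t) H̃(t) → ã⁻¹`.
The time change satisfies `T - τ(s) = (T - s)² / T` and `τ(s) ↑ T` as `s ↑ T`,
so `J(s) = (T - τ(s)) H̃(τ(s)) → ã⁻¹`.
-/

open Filter Matrix Topology

theorem tendsto_inv_sub_smul_intervalIntegral {E : Type*} [NormedAddCommGroup E]
    [NormedSpace ℝ E] [CompleteSpace E] {h : ℝ → E} (hc : Continuous h) (T : ℝ) :
    Tendsto (fun t => (T - t)⁻¹ • ∫ u in t..T, h u) (𝓝[≠] T) (𝓝 (h T)) := by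
  have hderiv : HasDerivAt (fun x => ∫ u in T..x, h u) (h T) T :=
    intervalIntegral.integral_hasDerivAt_right (hc.intervalIntegrable _ _)
      (hc.stronglyMeasurableAtFilter _ _) hc.continuousAt
  refine (hasDerivAt_iff_tendsto_slope.1 hderiv).congr fun t => ?_
  rw [slope_def_module, intervalIntegral.integral_same, sub_zero,
    intervalIntegral.integral_symm, smul_neg, ← neg_smul, ← inv_neg, neg_sub]

namespace Matrix

variable {m n : Type*}

theorem tendsto_inv_sub_smul_of_intervalIntegral {f : ℝ → Matrix m n ℝ} (hf : Continuous f)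
    (T : ℝ) :
    Tendsto (fun t => (T - t)⁻¹ • of fun i j => ∫ u in t..T, f u i j) (𝓝[≠] T)
      (𝓝 (f T)) :=
  tendsto_pi_nhds.2 fun i => tendsto_pi_nhds.2 fun j =>
    tendsto_inv_sub_smul_intervalIntegral
      ((continuous_apply j).comp ((continuous_apply i).comp hf)) T

variable [Fintype n] [DecidableEq n]

theorem inv_smul_of_ne_zero {𝕜 : Type*} [Field 𝕜] {k : 𝕜} (hk : k ≠ 0) (A : Matrix n n 𝕜) :
    (k • A)⁻¹ = k⁻¹ • A⁻¹ := by
  by_cases hA : IsUnit A.det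
  · exact inv_smul' A (Units.mk0 k hk) hA
  · have hkA : ¬IsUnit (k • A).det := by
      rwa [det_smul, IsUnit.mul_iff, not_and_or, or_iff_right (not_not.2 (hk.isUnit.pow _))]
    rw [nonsing_inv_apply_not_isUnit _ hA, nonsing_inv_apply_not_isUnit _ hkA, smul_zero]

theorem continuousAt_inv_of_det_ne_zero {𝕜 : Type*} [Field 𝕜] [TopologicalSpace 𝕜]
    [IsTopologicalDivisionRing 𝕜] {A : Matrix n n 𝕜} (hA : A.det ≠ 0) :
    ContinuousAt Inv.inv A :=
  continuousAt_matrix_inv A <| by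
    simpa only [Ring.inverse_eq_inv'] using continuousAt_inv₀ hA

theorem continuous_exp_smul (B : Matrix n n ℝ) :
    Continuous fun u : ℝ => NormedSpace.exp (u • B) := by
  -- any norm induces the product topology on matrices; this one makes `exp_continuous` apply
  let : NormedRing (Matrix n n ℝ) := Matrix.linftyOpNormedRing
  let : NormedAlgebra ℝ (Matrix n n ℝ) := Matrix.linftyOpNormedAlgebra
  let : NormedAlgebra ℚ (Matrix n n ℝ) := Matrix.linftyOpNormedAlgebra
  exact NormedSpace.exp_continuous.comp (continuous_id.smul continuous_const)

end Matrix

section TimeChange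

variable {T : ℝ}

theorem sub_mul_two_sub_div (hT : T ≠ 0) (s : ℝ) : T - s * (2 - s / T) = (T - s) ^ 2 / T := by
  field_simp
  ring

theorem tendsto_mul_two_sub_div_nhdsLT (hT : 0 < T) :
    Tendsto (fun s => s * (2 - s / T)) (𝓝[<] T) (𝓝[<] T) := by
  refine tendsto_nhdsWithin_of_tendsto_nhds_of_eventually_within _ ?_ ?_
  · have hcont : Continuous fun s : ℝ => s * (2 - s / T) := by fun_prop
    have hT' : T * (2 - T / T) = T := by field_simp; ring
    simpa only [hT'] using (hcont.tendsto T).mono_left nhdsWithin_le_nhds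
  · filter_upwards [self_mem_nhdsWithin] with s (hs : s < T)
    have hpos : 0 < T - s * (2 - s / T) := by
      rw [sub_mul_two_sub_div hT.ne']
      exact div_pos (pow_pos (sub_pos.2 hs) 2) hT
    exact Set.mem_Iio.2 (sub_pos.1 hpos)

end TimeChange

/-- With `J(s) = (T-s)²/T · H̃(τ(s))`, `τ(s) = s(2-s/T)`, `H̃(t) = K(t)⁻¹`,
`K(t) = ∫_t^T e^{B̃(T-u)} atil e^{B̃'(T-u)} du` and `atil` symmetric positive definite,
one has `atil J(s) → I` as `s ↑ T`. -/
theorem stmt_13 (d : ℕ) (T : ℝ) (hT : 0 < T) (B atil : Matrix (Fin d) (Fin d) ℝ)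
    (hpos : atil.PosDef)
    (K : ℝ → Matrix (Fin d) (Fin d) ℝ)
    (hK : K = fun t => Matrix.of fun i j => ∫ u in t..T,
      (NormedSpace.exp ((T - u) • B) * atil * (NormedSpace.exp ((T - u) • B))ᵀ) i j)
    (Htil : ℝ → Matrix (Fin d) (Fin d) ℝ) (hH : ∀ t, Htil t = (K t)⁻¹)
    (τ : ℝ → ℝ) (hτ : τ = fun s => s * (2 - s / T))
    (J : ℝ → Matrix (Fin d) (Fin d) ℝ)
    (hJ : J = fun s => ((T - s) ^ 2 / T) • Htil (τ s)) :
    Filter.Tendsto (fun s => atil * J s) (nhdsWithin T (Set.Iio T)) (nhds 1) := by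
  have hexp : Continuous fun u : ℝ => NormedSpace.exp ((T - u) • B) :=
    (continuous_exp_smul B).comp (continuous_const.sub continuous_id)
  have hK_scaled : Tendsto (fun t => (T - t)⁻¹ • K t) (𝓝[<] T) (𝓝 atil) := by
    have := tendsto_inv_sub_smul_of_intervalIntegral
      ((hexp.matrix_mul (continuous_const (y := atil))).matrix_mul hexp.matrix_transpose) T
    simpa [hK, NormedSpace.exp_zero] using this.mono_left (nhdsLT_le_nhdsNE T)
  have hdet : atil.det ≠ 0 := hpos.det_pos.ne'
  have hlim : Tendsto (fun s => atil * ((T - τ s)⁻¹ • K (τ s))⁻¹) (𝓝[<] T) (𝓝 1) := by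
    rw [← mul_nonsing_inv atil (isUnit_iff_ne_zero.2 hdet)]
    refine ((continuousAt_inv_of_det_ne_zero hdet).tendsto.comp ?_).const_mul atil
    exact hK_scaled.comp (hτ ▸ tendsto_mul_two_sub_div_nhdsLT hT)
  refine hlim.congr' ?_
  filter_upwards [self_mem_nhdsWithin] with s (hs : s < T)
  have hgap : T - τ s = (T - s) ^ 2 / T := hτ ▸ sub_mul_two_sub_div hT.ne' s
  have hgap_ne : T - τ s ≠ 0 := hgap ▸ (div_pos (pow_pos (sub_pos.2 hs) 2) hT).ne'
  simp only [hJ, hH]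
  rw [inv_smul_of_ne_zero (inv_ne_zero hgap_ne), inv_inv, hgap]
end
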